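/- arXiv:2012.00444 — 4 statements merged into one kernel-verified Lean document; each statement's English description precedes it below -/
import Mathlib

section
/- Let f, g, f₀ be probability densities on ℝ^d such that (1/2)·f₀(x) ≤ f(x) ≤ (3/2)·f₀(x) and (1/2)·f₀(x) ≤ g(x) ≤ (3/2)·f₀(x) for all x. Then h²(f,g) ≥ (1/6)·∫ (f−g)²/f₀ and χ²(f‖g) ≤ 2·∫ (f−g)²/f₀. -/
open MeasureTheory Real ENNReal

/-- A probability density on ℝ^d. -/
def IsDensity (d : ℕ) (f : (Fin d → ℝ) → ℝ) : Prop :=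
  Measurable f ∧ (∀ x, 0 ≤ f x) ∧ (∫⁻ x, ENNReal.ofReal (f x)) = 1

/-- Squared Hellinger distance. -/
noncomputable def hellSq (d : ℕ) (f g : (Fin d → ℝ) → ℝ) : ℝ≥0∞ :=
  ∫⁻ x, ENNReal.ofReal ((Real.sqrt (f x) - Real.sqrt (g x))^2)

/-- Chi-squared divergence `χ²(f ‖ g) = ∫ (f - g)²/g`. -/
noncomputable def chiSq (d : ℕ) (f g : (Fin d → ℝ) → ℝ) : ℝ≥0∞ :=
  ∫⁻ x, ENNReal.ofReal ((f x - g x)^2 / g x)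

theorem stmt12 (d : ℕ) (hd : 1 ≤ d) (f g f₀ : (Fin d → ℝ) → ℝ)
    (hf : IsDensity d f) (hg : IsDensity d g) (hf₀ : IsDensity d f₀)
    (hfs : ∀ x, (1/2) * f₀ x ≤ f x ∧ f x ≤ (3/2) * f₀ x)
    (hgs : ∀ x, (1/2) * f₀ x ≤ g x ∧ g x ≤ (3/2) * f₀ x) :
    hellSq d f g ≥
        ENNReal.ofReal (1/6) * ∫⁻ x, ENNReal.ofReal ((f x - g x)^2 / f₀ x) ∧
    chiSq d f g ≤ 2 * ∫⁻ x, ENNReal.ofReal ((f x - g x)^2 / f₀ x) := by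
  obtain ⟨-, hf0, -⟩ := hf
  obtain ⟨-, hg0, -⟩ := hg
  obtain ⟨-, hf₀0, -⟩ := hf₀
  constructor
  · rw [ge_iff_le, ← lintegral_const_mul' _ _ (by simp)]
    refine lintegral_mono fun x => ?_
    rw [← ENNReal.ofReal_mul (by norm_num)]
    apply ENNReal.ofReal_le_ofReal
    rcases eq_or_lt_of_le (hf₀0 x) with h0 | h0
    · have hfx : f x = 0 := le_antisymm (by linarith [(hfs x).2, h0.symm]) (hf0 x)
      have hgx : g x = 0 := le_antisymm (by linarith [(hgs x).2, h0.symm]) (hg0 x)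
      simp [hfx, hgx]
    · set sa := Real.sqrt (f x) with hsa
      set sb := Real.sqrt (g x) with hsb
      have ha : sa ^ 2 = f x := Real.sq_sqrt (hf0 x)
      have hb : sb ^ 2 = g x := Real.sq_sqrt (hg0 x)
      have hsa0 : 0 ≤ sa := Real.sqrt_nonneg _
      have hsb0 : 0 ≤ sb := Real.sqrt_nonneg _
      have ha2 : sa ^ 2 ≤ (3/2) * f₀ x := by rw [ha]; exact (hfs x).2
      have hb2 : sb ^ 2 ≤ (3/2) * f₀ x := by rw [hb]; exact (hgs x).2
      rw [← ha, ← hb, mul_div_assoc' , div_le_iff₀ h0]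
      nlinarith [mul_nonneg (sq_nonneg (sa - sb))
        (show (0:ℝ) ≤ 6 * f₀ x - (sa + sb) ^ 2 by nlinarith [sq_nonneg (sa - sb)]),
        sq_nonneg (sa - sb)]
  · rw [← lintegral_const_mul' _ _ (by simp)]
    refine lintegral_mono fun x => ?_
    rw [show (2:ℝ≥0∞) = ENNReal.ofReal 2 by simp, ← ENNReal.ofReal_mul (by norm_num)]
    apply ENNReal.ofReal_le_ofReal
    rcases eq_or_lt_of_le (hf₀0 x) with h0 | h0
    · have hgx : g x = 0 := le_antisymm (by linarith [(hgs x).2, h0.symm]) (hg0 x)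
      simp [hgx, ← h0]
    · have hg2 : f₀ x / 2 ≤ g x := by linarith [(hgs x).1]
      calc (f x - g x)^2 / g x ≤ (f x - g x)^2 / (f₀ x / 2) :=
            div_le_div_of_nonneg_left (sq_nonneg _) (by linarith) hg2
        _ = 2 * ((f x - g x)^2 / f₀ x) := by field_simp
end

section
/- Let d ≥ 1, let m ≥ 1 be an integer and n ≥ 2 an integer with m^d·6^d·5^{dm} ≤ √n, let J = {1,3,…,2m−1}^d, and let ε = c·n^{−1/2} for some c ∈ (0,1/2). Then for every α = (α_j)_{j∈J} ∈ {0,1}^J and every u ∈ ℝ^d, (1−c)·v(u) ≤ v(u) + ε·Σ_{j∈J} α_j v_j(u) ≤ (1+c)·v(u), where v(u) = φ(u_1)···φ(u_d) and v_j(u) = v_{j_1}(u_1)···v_{j_d}(u_d) with v_{j_i}(u) := 2^{5/4}·√π·√(5^{j_i}/j_i!)·φ(√3·u)·H_{j_i}(4u/√5). -/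
open Real MeasureTheory

/-!
For `z = ξ + i a` one has `∫ (i z)^j e^{-z²/2 + i z x} dξ = √(2π) (-1)^j H_j(x) e^{-x²/2}` for
every shift `a` (the case `j = 0` is the Gaussian Fourier transform, and differentiating in `x`
raises `j`). Bounding the integrand on the line `a = x / 4` gives
`|H_j(x)| ≤ √(e · j! · (j + 1)) e^{5x²/16}`, hence `|v_j(u)| ≤ C_j φ(u)` with
`C_j = 2^{5/4} √π √(e 5^j (j + 1))` and `∑_{k<m} C_{2k+1} ≤ 6 m 5^m`. The perturbation is thus
at most `ε (6 m 5^m)^d v(u) ≤ ε √n v(u) = c v(u)`.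
-/

noncomputable def gauss (x : ℝ) : ℝ := Real.exp (-(x^2)/2) / Real.sqrt (2*Real.pi)

/-- The probabilists' Hermite polynomial `H_j` evaluated at a real number. -/
noncomputable def hermiteEval (j : ℕ) (x : ℝ) : ℝ :=
  Polynomial.aeval x (Polynomial.hermite j)

/-- The Hermite perturbation function
`v_j(u) = 2^{5/4} √π √(5^j/j!) φ(√3 u) H_j(4u/√5)`. -/
noncomputable def vPert (j : ℕ) (u : ℝ) : ℝ :=
  2 ^ ((5 : ℝ)/4) * Real.sqrt Real.pi *
    Real.sqrt (5 ^ j / (Nat.factorial j)) * gauss (Real.sqrt 3 * u) *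
    hermiteEval j (4 * u / Real.sqrt 5)

lemma sqrt_le_sqrt_div_exp_one_mul_exp {X T : ℝ} (hT : 0 < T) :
    √X ≤ √(T / rexp 1) * rexp (X / (2 * T)) := by
  have hXT : X ≤ T / rexp 1 * rexp (X / T) := by
    have h := add_one_le_exp (X / T - 1)
    rw [Real.exp_sub] at h
    calc X = T * (X / T) := by field_simp
      _ ≤ T * (rexp (X / T) / rexp 1) := mul_le_mul_of_nonneg_left (by linarith) hT.le
      _ = T / rexp 1 * rexp (X / T) := by ring
  have hsq : rexp (X / T) = rexp (X / (2 * T)) ^ 2 := by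
    rw [← Real.exp_nat_mul]; congr 1; field_simp; norm_num
  calc √X ≤ √(T / rexp 1 * rexp (X / T)) := Real.sqrt_le_sqrt hXT
    _ = √(T / rexp 1) * rexp (X / (2 * T)) := by
      rw [Real.sqrt_mul (by positivity), hsq, Real.sqrt_sq (by positivity)]

open Complex in
noncomputable def hermiteIntegrand (a : ℝ) (j : ℕ) (x ξ : ℝ) : ℂ :=
  (I * (ξ + I * a)) ^ j * cexp (-(ξ + I * a) ^ 2 / 2 + I * (ξ + I * a) * x)

lemma norm_hermiteIntegrand (a : ℝ) (j : ℕ) (x ξ : ℝ) :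
    ‖hermiteIntegrand a j x ξ‖ = √(ξ ^ 2 + a ^ 2) ^ j * rexp ((a ^ 2 - ξ ^ 2) / 2 - a * x) := by
  have hz : ‖(ξ : ℂ) + Complex.I * a‖ = √(ξ ^ 2 + a ^ 2) := by
    rw [mul_comm, Complex.norm_add_mul_I]
  have hre : (-((ξ : ℂ) + Complex.I * a) ^ 2 / 2 + Complex.I * (ξ + Complex.I * a) * x).re =
      (a ^ 2 - ξ ^ 2) / 2 - a * x := by
    simp [pow_two]
    ring
  rw [hermiteIntegrand, norm_mul, norm_pow, norm_mul, Complex.norm_I, one_mul, hz,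
    Complex.norm_exp, hre]

lemma norm_hermiteIntegrand_le (a : ℝ) (j : ℕ) (x ξ : ℝ) :
    ‖hermiteIntegrand a j x ξ‖ ≤
      √((j + 1) / rexp 1) ^ j * rexp (a ^ 2 - a * x) * rexp (-(2 * ((j : ℝ) + 1))⁻¹ * ξ ^ 2) := by
  set T : ℝ := j + 1 with hT
  have hTpos : 0 < T := by positivity
  have hpow : √(ξ ^ 2 + a ^ 2) ^ j ≤
      √(T / rexp 1) ^ j * rexp (j * ((ξ ^ 2 + a ^ 2) / (2 * T))) := by
    rw [Real.exp_nat_mul, ← mul_pow]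
    exact pow_le_pow_left₀ (Real.sqrt_nonneg _)
      (sqrt_le_sqrt_div_exp_one_mul_exp hTpos) j
  have hexponent : j * ((ξ ^ 2 + a ^ 2) / (2 * T)) + ((a ^ 2 - ξ ^ 2) / 2 - a * x) ≤
      (a ^ 2 - a * x) + -(2 * T)⁻¹ * ξ ^ 2 := by
    have hj : (j : ℝ) = T - 1 := by rw [hT]; ring
    rw [hj]
    field_simp
    nlinarith [sq_nonneg a]
  rw [norm_hermiteIntegrand]
  calc √(ξ ^ 2 + a ^ 2) ^ j * rexp ((a ^ 2 - ξ ^ 2) / 2 - a * x)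
      ≤ √(T / rexp 1) ^ j * rexp (j * ((ξ ^ 2 + a ^ 2) / (2 * T))) *
          rexp ((a ^ 2 - ξ ^ 2) / 2 - a * x) := by gcongr
    _ ≤ √(T / rexp 1) ^ j * rexp (a ^ 2 - a * x) * rexp (-(2 * T)⁻¹ * ξ ^ 2) := by
      rw [mul_assoc, mul_assoc, ← Real.exp_add, ← Real.exp_add]
      gcongr

lemma continuous_hermiteIntegrand (a : ℝ) (j : ℕ) (x : ℝ) :
    Continuous (hermiteIntegrand a j x) := by
  unfold hermiteIntegrand; fun_prop

lemma integrable_hermiteIntegrand (a : ℝ) (j : ℕ) (x : ℝ) :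
    Integrable (hermiteIntegrand a j x) :=
  ((integrable_exp_neg_mul_sq (by positivity)).const_mul _).mono'
    (continuous_hermiteIntegrand a j x).aestronglyMeasurable
    (.of_forall (norm_hermiteIntegrand_le a j x))

lemma hasDerivAt_hermiteIntegrand (a : ℝ) (j : ℕ) (x ξ : ℝ) :
    HasDerivAt (hermiteIntegrand a j · ξ) (hermiteIntegrand a (j + 1) x ξ) x := by
  have hlin : HasDerivAt (fun y : ℝ => -((ξ : ℂ) + Complex.I * a) ^ 2 / 2 +
      Complex.I * (ξ + Complex.I * a) * y) (Complex.I * (ξ + Complex.I * a)) x := by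
    simpa using ((hasDerivAt_id x).ofReal_comp.const_mul
      (Complex.I * (ξ + Complex.I * a))).const_add (-((ξ : ℂ) + Complex.I * a) ^ 2 / 2)
  refine (hlin.cexp.const_mul ((Complex.I * (ξ + Complex.I * a)) ^ j)).congr_deriv ?_
  rw [hermiteIntegrand, pow_succ]
  ring

lemma integral_hermiteIntegrand_zero (a x : ℝ) :
    ∫ ξ, hermiteIntegrand a 0 x ξ = ((√(2 * π) * rexp (-(x ^ 2 / 2)) : ℝ) : ℂ) := by
  have hI : Complex.I ^ 2 = -1 := Complex.I_sq
  have hquad : ∀ ξ : ℝ, hermiteIntegrand a 0 x ξ = Complex.exp (-(1 / 2) * (ξ : ℂ) ^ 2 +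
      (Complex.I * x - Complex.I * a) * ξ + ((a : ℂ) ^ 2 / 2 - a * x)) := by
    intro ξ
    rw [hermiteIntegrand, pow_zero, one_mul]
    congr 1
    linear_combination ((a : ℂ) * x - (a : ℂ) ^ 2 / 2) * hI
  simp_rw [hquad]
  rw [integral_cexp_quadratic (by norm_num)]
  have hsqrt : ((π : ℂ) / -(-(1 / 2))) ^ (1 / 2 : ℂ) = ((√(2 * π) : ℝ) : ℂ) := by
    rw [show (π : ℂ) / -(-(1 / 2)) = ((2 * π : ℝ) : ℂ) by push_cast; ring,
      Real.sqrt_eq_rpow, Complex.ofReal_cpow Real.two_pi_pos.le]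
    norm_num
  have hexp : (a : ℂ) ^ 2 / 2 - a * x - (Complex.I * x - Complex.I * a) ^ 2 / (4 * -(1 / 2)) =
      ((-(x ^ 2 / 2) : ℝ) : ℂ) := by
    push_cast
    linear_combination (((x : ℂ) - a) ^ 2 / 2) * hI
  rw [hsqrt, hexp, ← Complex.ofReal_exp, ← Complex.ofReal_mul]

lemma norm_hermiteIntegrand_le_of_mem_ball (a : ℝ) (j : ℕ) {x₀ x : ℝ}
    (hx : x ∈ Metric.ball x₀ 1) (ξ : ℝ) :
    ‖hermiteIntegrand a j x ξ‖ ≤ √((j + 1) / rexp 1) ^ j * rexp (a ^ 2 + |a| * (|x₀| + 1)) *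
      rexp (-(2 * ((j : ℝ) + 1))⁻¹ * ξ ^ 2) := by
  have hx' : |x| ≤ |x₀| + 1 := by
    have := abs_sub_abs_le_abs_sub x x₀
    rw [Metric.mem_ball, Real.dist_eq] at hx
    linarith
  refine (norm_hermiteIntegrand_le a j x ξ).trans ?_
  gcongr
  nlinarith [neg_abs_le (a * x), abs_mul a x, abs_nonneg a]

lemma integral_hermiteIntegrand (a : ℝ) (j : ℕ) (x : ℝ) :
    ∫ ξ, hermiteIntegrand a j x ξ =
      ((√(2 * π) * deriv^[j] (fun y => rexp (-(y ^ 2 / 2))) x : ℝ) : ℂ) := by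
  induction j generalizing x with
  | zero => simpa using integral_hermiteIntegrand_zero a x
  | succ j ih =>
    obtain ⟨-, hderiv⟩ := hasDerivAt_integral_of_dominated_loc_of_deriv_le
      (Metric.ball_mem_nhds x one_pos)
      (.of_forall fun y => (continuous_hermiteIntegrand a j y).aestronglyMeasurable)
      (integrable_hermiteIntegrand a j x)
      (continuous_hermiteIntegrand a (j + 1) x).aestronglyMeasurable
      (.of_forall fun ξ y hy => norm_hermiteIntegrand_le_of_mem_ball a (j + 1) hy ξ)
      ((integrable_exp_neg_mul_sq (by positivity)).const_mul _)
      (.of_forall fun ξ y _ => hasDerivAt_hermiteIntegrand a j y ξ)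
    have hdiff : Differentiable ℝ (deriv^[j] fun y => rexp (-(y ^ 2 / 2))) := by
      rw [funext (Polynomial.deriv_gaussian_eq_hermite_mul_gaussian j)]
      have := (Polynomial.hermite j).differentiable_aeval (𝕜 := ℝ)
      fun_prop
    have hreal :
        HasDerivAt (fun y => ((√(2 * π) * deriv^[j] (fun y => rexp (-(y ^ 2 / 2))) y : ℝ) : ℂ))
        ((√(2 * π) * deriv^[j + 1] (fun y => rexp (-(y ^ 2 / 2))) x : ℝ) : ℂ) x := by
      rw [Function.iterate_succ_apply']
      exact ((hdiff x).hasDerivAt.const_mul _).ofReal_comp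
    simp_rw [ih] at hderiv
    exact hderiv.unique hreal

lemma abs_aeval_hermite_le (j : ℕ) (x : ℝ) :
    |Polynomial.aeval x (Polynomial.hermite j)| ≤
      √((j + 1) / rexp 1) ^ j * √(j + 1) * rexp (5 * x ^ 2 / 16) := by
  set H := Polynomial.aeval x (Polynomial.hermite j)
  have hnorm : ‖∫ ξ, hermiteIntegrand (x / 4) j x ξ‖ = √(2 * π) * (|H| * rexp (-(x ^ 2 / 2))) := by
    rw [integral_hermiteIntegrand, Polynomial.deriv_gaussian_eq_hermite_mul_gaussian,
      Complex.norm_real, Real.norm_eq_abs]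
    simp only [abs_mul, abs_pow, abs_neg, abs_one, one_pow, one_mul,
      abs_of_nonneg (Real.sqrt_nonneg _), abs_of_pos (Real.exp_pos _), H]
  have hbound : ‖∫ ξ, hermiteIntegrand (x / 4) j x ξ‖ ≤
      √((j + 1) / rexp 1) ^ j * rexp (-(3 * x ^ 2 / 16)) * (√(2 * π) * √(j + 1)) := by
    refine (norm_integral_le_of_norm_le ((integrable_exp_neg_mul_sq (by positivity)).const_mul _)
      (.of_forall fun ξ => norm_hermiteIntegrand_le (x / 4) j x ξ)).trans_eq ?_
    rw [integral_const_mul, integral_gaussian, ← Real.sqrt_mul (by positivity)]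
    congr 3
    · ring
    · field_simp
  rw [hnorm, mul_comm (√((j + 1) / rexp 1) ^ j * _), mul_assoc] at hbound
  have hcancel := le_of_mul_le_mul_left hbound (by positivity)
  calc |H| = |H| * rexp (-(x ^ 2 / 2)) * rexp (x ^ 2 / 2) := by
        rw [mul_assoc, ← Real.exp_add]; simp
    _ ≤ √(j + 1) * (√((j + 1) / rexp 1) ^ j * rexp (-(3 * x ^ 2 / 16))) * rexp (x ^ 2 / 2) := by
        gcongr
    _ = _ := by
        rw [mul_assoc, mul_assoc, ← Real.exp_add]; ring_nf

lemma add_one_div_exp_one_pow_le (j : ℕ) :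
    (((j : ℝ) + 1) / rexp 1) ^ j ≤ rexp 1 * j.factorial := by
  have h := pow_div_factorial_le_exp (x := (j : ℝ) + 1) (by positivity) (j + 1)
  rw [Nat.factorial_succ, Nat.cast_mul, Nat.cast_succ, pow_succ, Real.exp_add,
    div_le_iff₀ (by positivity)] at h
  rw [div_pow, Real.exp_one_pow, div_le_iff₀ (by positivity)]
  have hj : (0 : ℝ) < j + 1 := by positivity
  nlinarith [Real.exp_pos j, Real.exp_pos 1]

lemma abs_aeval_hermite_le_sqrt_factorial (j : ℕ) (x : ℝ) :
    |Polynomial.aeval x (Polynomial.hermite j)| ≤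
      √(rexp 1 * j.factorial * (j + 1)) * rexp (5 * x ^ 2 / 16) := by
  refine (abs_aeval_hermite_le j x).trans (mul_le_mul_of_nonneg_right ?_ (Real.exp_nonneg _))
  refine Real.le_sqrt_of_sq_le ?_
  rw [mul_pow, ← pow_mul, mul_comm j 2, pow_mul,
    Real.sq_sqrt (by positivity), Real.sq_sqrt (by positivity)]
  gcongr
  exact add_one_div_exp_one_pow_le j

lemma gauss_pos (x : ℝ) : 0 < gauss x := by
  unfold gauss; positivity

lemma gauss_sqrt_three_mul (u : ℝ) : gauss (√3 * u) = gauss u * rexp (-u ^ 2) := by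
  rw [gauss, gauss, mul_pow, Real.sq_sqrt (by norm_num), div_mul_eq_mul_div, ← Real.exp_add]
  congr 2
  ring

noncomputable def vPertBound (j : ℕ) : ℝ :=
  2 ^ ((5 : ℝ) / 4) * √π * √(rexp 1 * 5 ^ j * (j + 1))

lemma abs_vPert_le (j : ℕ) (u : ℝ) : |vPert j u| ≤ vPertBound j * gauss u := by
  have hH := abs_aeval_hermite_le_sqrt_factorial j (4 * u / √5)
  rw [show 5 * (4 * u / √5) ^ 2 / 16 = u ^ 2 by
    rw [div_pow, mul_pow, Real.sq_sqrt (by norm_num)]; ring] at hH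
  have hfac : (0 : ℝ) < j.factorial := by positivity
  have hgauss := gauss_pos u
  have hroot : √(5 ^ j / j.factorial) * √(rexp 1 * j.factorial * (j + 1)) =
      √(rexp 1 * 5 ^ j * (j + 1)) := by
    rw [← Real.sqrt_mul (by positivity)]
    congr 1
    field_simp
  rw [vPert, hermiteEval, gauss_sqrt_three_mul, abs_mul, abs_of_nonneg (by positivity)]
  calc 2 ^ ((5 : ℝ) / 4) * √π * √(5 ^ j / j.factorial) * (gauss u * rexp (-u ^ 2)) *
        |Polynomial.aeval (4 * u / √5) (Polynomial.hermite j)|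
      ≤ 2 ^ ((5 : ℝ) / 4) * √π * √(5 ^ j / j.factorial) * (gauss u * rexp (-u ^ 2)) *
        (√(rexp 1 * j.factorial * (j + 1)) * rexp (u ^ 2)) := by
        gcongr
    _ = vPertBound j * gauss u := by
        rw [vPertBound, ← hroot]
        have hexp : rexp (-u ^ 2) * rexp (u ^ 2) = 1 := by rw [← Real.exp_add]; simp
        linear_combination (2 ^ ((5 : ℝ) / 4) * √π * √(5 ^ j / j.factorial) * gauss u *
          √(rexp 1 * j.factorial * (j + 1))) * hexp

lemma sq_two_rpow_mul_sqrt_pi_le : (2 ^ ((5 : ℝ) / 4) * √π) ^ 2 ≤ 18 := by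
  have h4 : ((2 : ℝ) ^ ((5 : ℝ) / 4)) ^ 4 = 32 := by
    rw [← Real.rpow_natCast, ← Real.rpow_mul (by norm_num)]
    norm_num
  refine abs_le_of_sq_le_sq' ?_ (by norm_num) |>.2
  rw [← pow_mul, mul_pow, h4, pow_mul, Real.sq_sqrt Real.pi_pos.le]
  nlinarith [Real.pi_lt_d2, Real.pi_pos]

lemma vPertBound_two_mul_add_one_le {k m : ℕ} (hk : k < m) :
    vPertBound (2 * k + 1) ≤ 24 * m * 5 ^ k := by
  have hκ := sq_two_rpow_mul_sqrt_pi_le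
  have hkm : (k : ℝ) + 1 ≤ m := by exact_mod_cast hk
  have he := Real.exp_one_lt_d9
  rw [vPertBound, ← Real.sqrt_sq (by positivity : (0 : ℝ) ≤ 2 ^ ((5 : ℝ) / 4) * √π),
    ← Real.sqrt_mul (by positivity), Real.sqrt_le_left (by positivity)]
  have hκe : (2 ^ ((5 : ℝ) / 4) * √π) ^ 2 * rexp 1 ≤ 49 := by
    nlinarith [Real.exp_pos 1]
  have hm : (k : ℝ) + 1 ≤ m ^ 2 := by nlinarith
  calc (2 ^ ((5 : ℝ) / 4) * √π) ^ 2 * (rexp 1 * 5 ^ (2 * k + 1) * (((2 * k + 1 : ℕ) : ℝ) + 1))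
      = (2 ^ ((5 : ℝ) / 4) * √π) ^ 2 * rexp 1 * (10 * ((k : ℝ) + 1)) * ((5 : ℝ) ^ k) ^ 2 := by
        push_cast; ring
    _ ≤ 49 * (10 * (m : ℝ) ^ 2) * ((5 : ℝ) ^ k) ^ 2 := by gcongr
    _ ≤ (24 * (m : ℝ) * 5 ^ k) ^ 2 := by nlinarith [pow_pos (by norm_num : (0 : ℝ) < 5) k]

lemma sum_vPertBound_two_mul_add_one_le (m : ℕ) :
    ∑ k : Fin m, vPertBound (2 * k + 1) ≤ 6 * m * 5 ^ m := by
  have hgeom : ∑ k ∈ Finset.range m, (5 : ℝ) ^ k = (5 ^ m - 1) / 4 := by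
    rw [geom_sum_eq (by norm_num)]; norm_num
  calc ∑ k : Fin m, vPertBound (2 * k + 1)
      ≤ ∑ k : Fin m, 24 * (m : ℝ) * 5 ^ (k : ℕ) :=
        Finset.sum_le_sum fun k _ => vPertBound_two_mul_add_one_le k.2
    _ = 6 * m * (5 ^ m - 1) := by
        rw [Fin.sum_univ_eq_sum_range (fun k => 24 * (m : ℝ) * 5 ^ k), ← Finset.mul_sum, hgeom]
        ring
    _ ≤ 6 * m * 5 ^ m := by gcongr; linarith

lemma abs_sum_mul_prod_le {ι κ X : Type*} [Fintype ι] [DecidableEq ι] [Fintype κ]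
    (α : (ι → κ) → ℝ) (hα : ∀ k, |α k| ≤ 1) (f : κ → X → ℝ) (B : κ → ℝ) (g : X → ℝ)
    (hf : ∀ j x, |f j x| ≤ B j * g x) (u : ι → X) :
    |∑ k : ι → κ, α k * ∏ i, f (k i) (u i)| ≤ (∑ j, B j) ^ Fintype.card ι * ∏ i, g (u i) := by
  calc |∑ k : ι → κ, α k * ∏ i, f (k i) (u i)|
      ≤ ∑ k : ι → κ, |α k| * ∏ i, |f (k i) (u i)| := by
        simpa only [abs_mul, Finset.abs_prod] using
          Finset.abs_sum_le_sum_abs (fun k => α k * ∏ i, f (k i) (u i)) Finset.univ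
    _ ≤ ∑ k : ι → κ, ∏ i, B (k i) * g (u i) := by
        gcongr with k
        calc |α k| * ∏ i, |f (k i) (u i)| ≤ 1 * ∏ i, |f (k i) (u i)| := by gcongr; exact hα k
          _ ≤ ∏ i, B (k i) * g (u i) := by
            rw [one_mul]
            exact Finset.prod_le_prod (fun i _ => abs_nonneg _) fun i _ => hf _ _
    _ = (∑ j, B j) ^ Fintype.card ι * ∏ i, g (u i) := by
        simp_rw [Finset.prod_mul_distrib, ← Finset.sum_mul]
        rw [← Fintype.prod_sum (fun _ j => B j), Finset.prod_const, Finset.card_univ]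

/- The index set `J = {1, 3, …, 2m-1}^d` is encoded as `Fin d → Fin m`, with
`k : Fin d → Fin m` corresponding to the multi-index `j` with `j i = 2 * k i + 1`. -/

theorem stmt13_general (d m n : ℕ)
    (hcond : (m : ℝ) ^ d * 6 ^ d * 5 ^ (d * m) ≤ Real.sqrt n)
    (c : ℝ) (hc : 0 < c ∧ c < 1/2)
    (ε : ℝ) (hε : ε = c * (n : ℝ) ^ (-(1 : ℝ)/2))
    (α : (Fin d → Fin m) → ℝ) (hα : ∀ k, α k = 0 ∨ α k = 1)
    (u : Fin d → ℝ) :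
    (1 - c) * ∏ i, gauss (u i) ≤
      (∏ i, gauss (u i)) +
        ε * ∑ k : Fin d → Fin m, α k * ∏ i, vPert (2 * (k i : ℕ) + 1) (u i) ∧
    (∏ i, gauss (u i)) +
        ε * ∑ k : Fin d → Fin m, α k * ∏ i, vPert (2 * (k i : ℕ) + 1) (u i) ≤
      (1 + c) * ∏ i, gauss (u i) := by
  set P := ∏ i, gauss (u i)
  set S := ∑ k : Fin d → Fin m, α k * ∏ i, vPert (2 * (k i : ℕ) + 1) (u i)
  have hP : 0 ≤ P := Finset.prod_nonneg fun i _ => (gauss_pos (u i)).le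
  have hε_eq : ε = c * (√n)⁻¹ := by
    rw [hε, Real.sqrt_eq_rpow, ← Real.rpow_neg (by positivity), neg_div]
  have hε0 : 0 ≤ ε := by rw [hε_eq]; exact mul_nonneg hc.1.le (by positivity)
  have hS : |S| ≤ √n * P := by
    refine (abs_sum_mul_prod_le α (fun k => by rcases hα k with h | h <;> simp [h])
      (fun k => vPert (2 * k + 1)) (fun k => vPertBound (2 * k + 1)) gauss
      (fun k => abs_vPert_le _) u).trans ?_
    rw [Fintype.card_fin]
    gcongr
    calc (∑ k : Fin m, vPertBound (2 * k + 1)) ^ d ≤ (6 * m * 5 ^ m) ^ d := by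
          gcongr
          · exact Finset.sum_nonneg fun k _ => by unfold vPertBound; positivity
          · exact sum_vPertBound_two_mul_add_one_le m
      _ = (m : ℝ) ^ d * 6 ^ d * 5 ^ (d * m) := by ring
      _ ≤ √n := hcond
  have hεS : |ε * S| ≤ c * P := calc
    |ε * S| ≤ ε * (√n * P) := by rw [abs_mul, abs_of_nonneg hε0]; gcongr
    _ = c * ((√n)⁻¹ * √n) * P := by rw [hε_eq]; ring
    _ ≤ c * 1 * P := by gcongr; exacts [hc.1.le, inv_mul_le_one]
    _ = c * P := by ring
  constructor <;> linarith [abs_le.mp hεS]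

theorem stmt13 (d m n : ℕ) (hd : 1 ≤ d) (hm : 1 ≤ m) (hn : 2 ≤ n)
    (hcond : (m : ℝ) ^ d * 6 ^ d * 5 ^ (d * m) ≤ Real.sqrt n)
    (c : ℝ) (hc : 0 < c ∧ c < 1/2)
    (ε : ℝ) (hε : ε = c * (n : ℝ) ^ (-(1 : ℝ)/2))
    (α : (Fin d → Fin m) → ℝ) (hα : ∀ k, α k = 0 ∨ α k = 1)
    (u : Fin d → ℝ) :
    (1 - c) * ∏ i, gauss (u i) ≤
      (∏ i, gauss (u i)) +
        ε * ∑ k : Fin d → Fin m, α k * ∏ i, vPert (2 * (k i : ℕ) + 1) (u i) ∧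
    (∏ i, gauss (u i)) +
        ε * ∑ k : Fin d → Fin m, α k * ∏ i, vPert (2 * (k i : ℕ) + 1) (u i) ≤
      (1 + c) * ∏ i, gauss (u i) :=
  stmt13_general d m n hcond c hc ε hε α hα u
end

section
/- Let p > 0, M > 0, let k₀ ≥ 1 be an integer, and for positive integers ℓ_1, …, ℓ_{j'} ∈ {1,…,k₀} set A_{j'} := 1 + Σ_{j=1}^{j'} (ℓ_j − 1)·M·log(ℓ_j e). Then for every integer j' ≥ 2 and every fixed ℓ_1 ∈ {1,…,k₀}, Σ_{ℓ_2=1}^{k₀} ⋯ Σ_{ℓ_{j'}=1}^{k₀} A_{j'}^{−(p+j')} ≤ A_1^{−(p+1)} · Π_{j=2}^{j'} (1 + 1/(M·(p+j−1))), where A_1 = 1 + (ℓ_1−1)·M·log(ℓ_1 e). -/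
open Real

lemma key18 (q M a : ℝ) (hq : 1 ≤ q) (hM : 0 < M) (ha : 0 < a) :
    M * q * (a + M) ^ (-(q+1)) ≤ a ^ (-q) - (a + M) ^ (-q) := by
  have hb : (0:ℝ) < a + M := by linarith
  have bern : 1 + q * (M / a) ≤ (1 + M / a) ^ q :=
    one_add_mul_self_le_rpow_one_add (by
      have : (0:ℝ) ≤ M / a := by positivity
      linarith) hq
  have hba : (1 : ℝ) + M / a = (a + M) / a := by field_simp
  rw [hba, Real.div_rpow hb.le ha.le] at bern
  have haq : (0:ℝ) < a ^ q := Real.rpow_pos_of_pos ha q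
  have hbq : (0:ℝ) < (a + M) ^ q := Real.rpow_pos_of_pos hb q
  have h1 : a ^ (-q) = (a ^ q)⁻¹ := Real.rpow_neg ha.le q
  have h2 : (a + M) ^ (-q) = ((a + M) ^ q)⁻¹ := Real.rpow_neg hb.le q
  have h3 : (a + M) ^ (-(q+1)) = ((a+M) ^ q)⁻¹ * (a + M)⁻¹ := by
    rw [show -(q+1) = -q + (-1) by ring, Real.rpow_add hb, Real.rpow_neg_one, h2]
  rw [h1, h2, h3]
  have step1 : (a^q)⁻¹ - ((a+M)^q)⁻¹ = ((a+M)^q / a^q - 1) * ((a+M)^q)⁻¹ := by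
    field_simp
  rw [step1]
  have h4 : q * (M / a) ≤ (a+M)^q / a^q - 1 := by linarith
  have h5 : M * q * (a+M)⁻¹ ≤ q * (M / a) := by
    rw [div_eq_mul_inv]
    have hinv : (a + M)⁻¹ ≤ a⁻¹ := by
      apply inv_anti₀ ha; linarith
    calc M * q * (a+M)⁻¹ ≤ M * q * a⁻¹ :=
          mul_le_mul_of_nonneg_left hinv (by positivity)
      _ = q * (M * a⁻¹) := by ring
  calc M * q * (((a+M)^q)⁻¹ * (a+M)⁻¹) = (M * q * (a+M)⁻¹) * ((a+M)^q)⁻¹ := by ring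
    _ ≤ (q * (M/a)) * ((a+M)^q)⁻¹ :=
        mul_le_mul_of_nonneg_right h5 (by positivity)
    _ ≤ ((a+M)^q / a^q - 1) * ((a+M)^q)⁻¹ :=
        mul_le_mul_of_nonneg_right h4 (by positivity)

lemma step18 (M q : ℝ) (hM : 0 < M) (hq : 1 ≤ q) (k₀ : ℕ) (hk₀ : 1 ≤ k₀)
    (B : ℝ) (hB : 1 ≤ B) :
    ∑ a : Fin k₀, (B + ((a : ℕ) : ℝ) * M * Real.log (((a : ℕ) + 1) * Real.exp 1)) ^ (-(q+1))
      ≤ B ^ (-q) * (1 + 1 / (M * q)) := by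
  have hB0 : (0:ℝ) < B := by linarith
  have hq0 : (0:ℝ) < q := by linarith
  have hterm : ∀ a : Fin k₀,
      (B + ((a : ℕ) : ℝ) * M * Real.log (((a : ℕ) + 1) * Real.exp 1)) ^ (-(q+1))
      ≤ (B + ((a : ℕ) : ℝ) * M) ^ (-(q+1)) := by
    intro a
    have hlog : (1:ℝ) ≤ Real.log ((((a:ℕ):ℝ) + 1) * Real.exp 1) := by
      rw [Real.log_mul (by positivity) (Real.exp_pos 1).ne', Real.log_exp]
      have : (0:ℝ) ≤ Real.log (((a:ℕ):ℝ) + 1) := Real.log_nonneg (by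
        have : (0:ℝ) ≤ ((a:ℕ):ℝ) := Nat.cast_nonneg _
        linarith)
      linarith
    have hle : B + ((a : ℕ) : ℝ) * M ≤ B + ((a : ℕ) : ℝ) * M * Real.log ((((a:ℕ):ℝ) + 1) * Real.exp 1) := by
      have h0 : (0:ℝ) ≤ ((a:ℕ):ℝ) * M := by positivity
      nlinarith
    exact Real.rpow_le_rpow_of_nonpos (by positivity) hle (by linarith)
  set f : ℕ → ℝ := fun i => (B + (i:ℝ) * M) ^ (-(q+1)) with hf
  set g : ℕ → ℝ := fun i => (B + (i:ℝ) * M) ^ (-q) / (M*q) with hg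
  calc ∑ a : Fin k₀, (B + ((a : ℕ) : ℝ) * M * Real.log (((a : ℕ) + 1) * Real.exp 1)) ^ (-(q+1))
      ≤ ∑ a : Fin k₀, f (a : ℕ) := Finset.sum_le_sum fun a _ => hterm a
    _ = ∑ i ∈ Finset.range k₀, f i := Fin.sum_univ_eq_sum_range f k₀
    _ ≤ B ^ (-q) * (1 + 1 / (M * q)) := by
        obtain ⟨m, rfl⟩ : ∃ m, k₀ = m + 1 := ⟨k₀ - 1, (Nat.succ_pred_eq_of_pos hk₀).symm⟩
        rw [Finset.sum_range_succ']
        have hmain : ∑ i ∈ Finset.range m, f (i+1) ≤ g 0 - g m := by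
          refine le_trans (Finset.sum_le_sum ?_) (le_of_eq (Finset.sum_range_sub' g m))
          intro i _
          show (B + ((i+1:ℕ):ℝ)*M)^(-(q+1))
              ≤ (B + (i:ℝ)*M)^(-q)/(M*q) - (B + ((i+1:ℕ):ℝ)*M)^(-q)/(M*q)
          have ha : (0:ℝ) < B + (i:ℝ) * M := by positivity
          have hk := key18 q M (B + (i:ℝ)*M) hq hM ha
          rw [show B + (i:ℝ)*M + M = B + ((i+1:ℕ):ℝ)*M by push_cast; ring] at hk
          rw [div_sub_div_same, le_div_iff₀ (by positivity)]
          linarith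
        have hg0 : g 0 = B ^ (-q) / (M*q) := by simp [hg]
        have hgm : 0 ≤ g m := by
          have : (0:ℝ) < B + (m:ℝ)*M := by positivity
          have := Real.rpow_pos_of_pos this (-q)
          positivity
        have hf0 : f 0 ≤ B ^ (-q) := by
          have : f 0 = B ^ (-(q+1)) := by simp [hf]
          rw [this]
          exact Real.rpow_le_rpow_of_exponent_le hB (by linarith)
        have heq : B ^ (-q) * (1 + 1/(M*q)) = B ^ (-q) + B ^ (-q)/(M*q) := by
          rw [mul_add, mul_one, mul_one_div]
        rw [heq]
        have := hmain
        rw [hg0] at this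
        linarith

lemma main18 (p M : ℝ) (hp : 0 < p) (hM : 0 < M) (k₀ : ℕ) (hk₀ : 1 ≤ k₀) :
    ∀ n : ℕ, 1 ≤ n → ∀ A : ℝ, 1 ≤ A →
    (∑ ℓ : Fin n → Fin k₀,
        (A + ∑ j, ((ℓ j : ℕ) : ℝ) * M * Real.log (((ℓ j : ℕ) + 1) * Real.exp 1))
          ^ (-(p + (n:ℝ) + 1)))
      ≤ A ^ (-(p+1)) * ∏ j ∈ Finset.Icc 2 (n+1), (1 + 1 / (M * (p + (j:ℝ) - 1))) := by
  intro n hn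
  induction n, hn using Nat.le_induction with
  | base =>
    intro A hA
    rw [show (2:ℕ) = 1 + 1 from rfl, Finset.Icc_self, Finset.prod_singleton]
    have hsum : (∑ ℓ : Fin 1 → Fin k₀,
        (A + ∑ j, ((ℓ j : ℕ) : ℝ) * M * Real.log (((ℓ j : ℕ) + 1) * Real.exp 1))
          ^ (-(p + (1:ℕ) + 1)))
        = ∑ a : Fin k₀, (A + ((a : ℕ) : ℝ) * M * Real.log (((a : ℕ) + 1) * Real.exp 1)) ^ (-((p+1)+1)) := by
      refine (Fintype.sum_equiv (Equiv.funUnique (Fin 1) (Fin k₀)) _ _ ?_)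
      intro ℓ
      simp [Fin.sum_univ_one]
    rw [hsum]
    have := step18 M (p+1) hM (by linarith) k₀ hk₀ A hA
    convert this using 3 <;> push_cast <;> ring
  | succ n hn ih =>
    intro A hA
    have hn0 : (0:ℝ) ≤ (n:ℝ) := Nat.cast_nonneg n
    set q : ℝ := p + (n:ℝ) + 1 with hqdef
    have hq1 : (1:ℝ) ≤ q := by rw [hqdef]; linarith
    have hq0 : (0:ℝ) < q := by linarith
    have htnn : ∀ a : Fin k₀,
        0 ≤ ((a:ℕ):ℝ) * M * Real.log ((((a:ℕ):ℝ) + 1) * Real.exp 1) := by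
      intro a
      have hl : 0 ≤ Real.log ((((a:ℕ):ℝ) + 1) * Real.exp 1) := by
        apply Real.log_nonneg
        have h1 : (1:ℝ) ≤ ((a:ℕ):ℝ) + 1 := by
          have : (0:ℝ) ≤ ((a:ℕ):ℝ) := Nat.cast_nonneg _
          linarith
        have h2 : (1:ℝ) ≤ Real.exp 1 := by
          have := Real.add_one_le_exp (1:ℝ); linarith
        nlinarith
      have : (0:ℝ) ≤ ((a:ℕ):ℝ) * M := by positivity
      exact mul_nonneg this hl
    have hBc : ∀ c : Fin n → Fin k₀,
        (1:ℝ) ≤ A + ∑ j, ((c j : ℕ) : ℝ) * M * Real.log (((c j : ℕ) + 1) * Real.exp 1) := by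
      intro c
      have : (0:ℝ) ≤ ∑ j, ((c j : ℕ) : ℝ) * M * Real.log (((c j : ℕ) + 1) * Real.exp 1) :=
        Finset.sum_nonneg fun j _ => htnn (c j)
      linarith
    calc (∑ ℓ : Fin (n+1) → Fin k₀,
        (A + ∑ j, ((ℓ j : ℕ) : ℝ) * M * Real.log (((ℓ j : ℕ) + 1) * Real.exp 1))
          ^ (-(p + ((n+1:ℕ):ℝ) + 1)))
        = ∑ c : Fin n → Fin k₀, ∑ a : Fin k₀,
            ((A + ∑ j, ((c j : ℕ) : ℝ) * M * Real.log (((c j : ℕ) + 1) * Real.exp 1))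
              + ((a:ℕ):ℝ) * M * Real.log (((a:ℕ) + 1) * Real.exp 1)) ^ (-(q+1)) := by
          rw [← Equiv.sum_comp (Fin.consEquiv (fun _ : Fin (n+1) => Fin k₀))]
          rw [Fintype.sum_prod_type, Finset.sum_comm]
          refine Finset.sum_congr rfl fun c _ => Finset.sum_congr rfl fun a _ => ?_
          have h1 : ∀ j : Fin (n+1), ((Fin.consEquiv (fun _ : Fin (n+1) => Fin k₀)) (a, c)) j
              = Fin.cons (α := fun _ : Fin (n+1) => Fin k₀) a c j := fun j => rfl
          simp only [h1, Fin.sum_univ_succ, Fin.cons_zero, Fin.cons_succ]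
          congr 1
          · ring
          · rw [hqdef]; push_cast; ring
      _ ≤ ∑ c : Fin n → Fin k₀,
            (A + ∑ j, ((c j : ℕ) : ℝ) * M * Real.log (((c j : ℕ) + 1) * Real.exp 1)) ^ (-q)
              * (1 + 1/(M*q)) := by
          refine Finset.sum_le_sum fun c _ => ?_
          exact step18 M q hM hq1 k₀ hk₀ _ (hBc c)
      _ = (1 + 1/(M*q)) * ∑ c : Fin n → Fin k₀,
            (A + ∑ j, ((c j : ℕ) : ℝ) * M * Real.log (((c j : ℕ) + 1) * Real.exp 1)) ^ (-q) := by
          rw [← Finset.sum_mul, mul_comm]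
      _ ≤ (1 + 1/(M*q)) * (A ^ (-(p+1)) * ∏ j ∈ Finset.Icc 2 (n+1), (1 + 1 / (M * (p + (j:ℝ) - 1)))) := by
          refine mul_le_mul_of_nonneg_left (ih A hA) (by positivity)
      _ = A ^ (-(p+1)) * ∏ j ∈ Finset.Icc 2 (n+1+1), (1 + 1 / (M * (p + (j:ℝ) - 1))) := by
          rw [Finset.prod_Icc_succ_top (by omega : 2 ≤ n+1+1)]
          have h2 : p + ((n+1+1:ℕ):ℝ) - 1 = q := by rw [hqdef]; push_cast; ring
          rw [h2]; ring

theorem stmt18 (p M : ℝ) (hp : 0 < p) (hM : 0 < M)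
    (k₀ : ℕ) (hk₀ : 1 ≤ k₀) (j' : ℕ) (hj' : 2 ≤ j')
    (ℓ₁ : ℕ) (hℓ₁ : 1 ≤ ℓ₁) (hℓ₁' : ℓ₁ ≤ k₀) :
    (∑ ℓ : Fin (j' - 1) → Fin k₀,
        ((1 + ((ℓ₁ : ℝ) - 1) * M * Real.log (ℓ₁ * Real.exp 1) +
            ∑ j, ((ℓ j : ℕ) : ℝ) * M * Real.log (((ℓ j : ℕ) + 1) * Real.exp 1))
          ^ (-(p + j'))))
      ≤ (1 + ((ℓ₁ : ℝ) - 1) * M * Real.log (ℓ₁ * Real.exp 1)) ^ (-(p + 1)) *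
          ∏ j ∈ Finset.Icc 2 j', (1 + 1 / (M * (p + j - 1))) := by
  have hℓ₁c : (1:ℝ) ≤ (ℓ₁:ℝ) := by exact_mod_cast hℓ₁
  have hA : (1:ℝ) ≤ 1 + ((ℓ₁ : ℝ) - 1) * M * Real.log (ℓ₁ * Real.exp 1) := by
    have he : (1:ℝ) ≤ Real.exp 1 := by
      have := Real.add_one_le_exp (1:ℝ); linarith
    have hl : 0 ≤ Real.log ((ℓ₁:ℝ) * Real.exp 1) := Real.log_nonneg (by nlinarith)
    have := mul_nonneg (mul_nonneg (by linarith : (0:ℝ) ≤ (ℓ₁:ℝ) - 1) hM.le) hl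
    linarith
  have h := main18 p M hp hM k₀ hk₀ (j'-1) (by omega) _ hA
  rw [show j'-1+1 = j' from by omega] at h
  have hc : ((j' - 1 : ℕ):ℝ) = (j':ℝ) - 1 := by
    push_cast [Nat.cast_sub (show 1 ≤ j' by omega)]; ring
  rw [hc] at h
  have he : -(p + ((j':ℝ) - 1) + 1) = -(p + (j':ℝ)) := by ring
  simp only [he] at h
  exact h
end

section
/- Let k₀ ≥ 3 be an integer and let M ≥ 2 be a real number with log log k₀ ≤ M. Then Σ_{ℓ=1}^{k₀} (1 + (ℓ−1)·M·log(ℓe))^{−1} ≤ 3. -/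
/-!
For `ℓ ≥ 3` we have `ℓ - 1 ≥ 2ℓ/3`, so the `ℓ`-th term is at most `3/(2M) · 1/(ℓ (1 + log ℓ))`,
and by concavity of `log` this is at most `3/(2M)` times the increment of `log (1 + log ℓ)`.
The tail from `ℓ = 3` therefore telescopes to at most
`3/(2M) · (log (1 + log k₀) - log (1 + log 2)) ≤ 3/2 + 1/4`, using `log (1 + L) ≤ log 2 + log L`
and `log (log k₀) ≤ M`; the terms `ℓ = 1, 2` contribute `1` and at most `1/4`.
-/

open Real

theorem one_sub_div_le_log_sub_log {x y : ℝ} (hx : 0 < x) (hy : 0 < y) :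
    1 - y / x ≤ log x - log y := by
  have h := one_sub_inv_le_log_of_pos (div_pos hx hy)
  rwa [inv_div, log_div hx.ne' hy.ne'] at h

theorem inv_mul_one_add_log_le_log_one_add_log_sub {a : ℝ} (ha : 2 ≤ a) :
    (a * (1 + log a))⁻¹ ≤ log (1 + log a) - log (1 + log (a - 1)) := by
  have hlog_pred : 0 ≤ log (a - 1) := log_nonneg (by linarith)
  have hlog_le : log (a - 1) ≤ log a := log_le_log (by linarith) (by linarith)
  have hv : 0 < 1 + log a := by linarith
  have hstep : a⁻¹ ≤ log a - log (a - 1) := by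
    have h := one_sub_div_le_log_sub_log (by linarith : 0 < a) (by linarith : 0 < a - 1)
    rwa [sub_div, div_self (by positivity), sub_sub_cancel, one_div] at h
  calc (a * (1 + log a))⁻¹ = a⁻¹ / (1 + log a) := by rw [mul_inv, div_eq_mul_inv]
    _ ≤ (log a - log (a - 1)) / (1 + log a) := by gcongr
    _ = 1 - (1 + log (a - 1)) / (1 + log a) := by field_simp; ring
    _ ≤ log (1 + log a) - log (1 + log (a - 1)) :=
      one_sub_div_le_log_sub_log hv (by linarith)

theorem inv_one_add_mul_log_mul_exp_le {a M : ℝ} (ha : 3 ≤ a) (hM : 0 < M) :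
    (1 + (a - 1) * M * log (a * exp 1))⁻¹ ≤
      3 / (2 * M) * (log (1 + log a) - log (1 + log (a - 1))) := by
  have hlog : 0 < 1 + log a := by linarith [log_nonneg (by linarith : (1 : ℝ) ≤ a)]
  rw [log_mul (by positivity) (exp_pos 1).ne', log_exp]
  calc (1 + (a - 1) * M * (log a + 1))⁻¹ ≤ (2 / 3 * M * (a * (1 + log a)))⁻¹ := by
        gcongr
        nlinarith [mul_pos hM hlog]
    _ = 3 / (2 * M) * (a * (1 + log a))⁻¹ := by field_simp
    _ ≤ 3 / (2 * M) * (log (1 + log a) - log (1 + log (a - 1))) := by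
        gcongr
        exact inv_mul_one_add_log_le_log_one_add_log_sub (by linarith)

theorem Finset.sum_Ioc_le_sub_of_le_sub {G : Type*} [AddCommGroup G] [PartialOrder G]
    [IsOrderedAddMonoid G] {f g : ℕ → G} {m n : ℕ} (hmn : m ≤ n)
    (h : ∀ k, m ≤ k → f (k + 1) ≤ g (k + 1) - g k) :
    ∑ k ∈ Finset.Ioc m n, f k ≤ g n - g m := by
  induction n, hmn using Nat.le_induction with
  | base => simp
  | succ n hmn ih =>
    rw [Finset.sum_Ioc_succ_top hmn, ← sub_add_sub_cancel']
    exact add_le_add ih (h n hmn)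

theorem log_one_add_sub_log_one_add_le {L b : ℝ} (hL : 1 ≤ L) (hb : 0 < b) :
    log (1 + L) - log (1 + b) ≤ log L + (1 - b) / (1 + b) := by
  have h2L : log (1 + L) ≤ log 2 + log L := by
    rw [← log_mul two_ne_zero (by positivity)]
    exact log_le_log (by positivity) (by linarith)
  have h2b : log 2 - log (1 + b) ≤ (1 - b) / (1 + b) := by
    rw [← log_div two_ne_zero (by positivity)]
    calc log (2 / (1 + b)) ≤ 2 / (1 + b) - 1 := log_le_sub_one_of_pos (by positivity)
      _ = (1 - b) / (1 + b) := by field_simp; ring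
  linarith

theorem Finset.sum_Icc_one_eq_add_add_sum_Ioc_two {A : Type*} [AddCommMonoid A] (f : ℕ → A)
    {n : ℕ} (hn : 2 ≤ n) :
    ∑ k ∈ Finset.Icc 1 n, f k = f 1 + f 2 + ∑ k ∈ Finset.Ioc 2 n, f k := by
  rw [show Finset.Icc 1 n = Finset.Ioc 0 n from Finset.Icc_add_one_left_eq_Ioc 0 n,
    ← Finset.sum_Ioc_consecutive f (Nat.zero_le 2) hn]
  simp [Finset.sum_Ioc_succ_top]

theorem mul_log_one_add_sub_log_one_add_log_two_le {L M : ℝ} (hL : 1 ≤ L) (hM : 2 ≤ M)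
    (hLM : log L ≤ M) :
    3 / (2 * M) * (log (1 + L) - log (1 + log 2)) ≤ 7 / 4 := by
  have hlog2 : 1 / 2 < log 2 := by linarith [log_two_gt_d9]
  have hcorr : 3 / (2 * M) * ((1 - log 2) / (1 + log 2)) ≤ 1 / 4 := by
    rw [div_mul_div_comm, div_le_iff₀ (by positivity)]
    nlinarith
  calc 3 / (2 * M) * (log (1 + L) - log (1 + log 2))
      ≤ 3 / (2 * M) * (M + (1 - log 2) / (1 + log 2)) := by
        gcongr
        linarith [log_one_add_sub_log_one_add_le hL (log_pos one_lt_two)]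
    _ ≤ 7 / 4 := by
        rw [mul_add, show 3 / (2 * M) * M = 3 / 2 by field_simp]
        linarith

theorem stmt19 (k₀ : ℕ) (hk₀ : 3 ≤ k₀) (M : ℝ) (hM : 2 ≤ M)
    (hlog : Real.log (Real.log k₀) ≤ M) :
    (∑ ℓ ∈ Finset.Icc 1 k₀,
        (1 + ((ℓ : ℝ) - 1) * M * Real.log (ℓ * Real.exp 1))⁻¹) ≤ 3 := by
  set f : ℕ → ℝ := fun ℓ ↦ (1 + ((ℓ : ℝ) - 1) * M * log (ℓ * exp 1))⁻¹
  set g : ℕ → ℝ := fun n ↦ 3 / (2 * M) * log (1 + log n)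
  have hf1 : f 1 = 1 := by simp [f]
  have hf2 : f 2 ≤ 1 / 4 := by
    simp only [f, Nat.cast_ofNat, log_mul two_ne_zero (exp_pos 1).ne', log_exp]
    rw [inv_le_comm₀ (by positivity) (by norm_num)]
    nlinarith [log_two_gt_d9]
  have htail : ∑ ℓ ∈ Finset.Ioc 2 k₀, f ℓ ≤ g k₀ - g 2 := by
    refine Finset.sum_Ioc_le_sub_of_le_sub (by omega) fun k hk ↦ ?_
    have h := inv_one_add_mul_log_mul_exp_le (a := k + 1) (by norm_cast; omega) (by positivity)
    simp only [f, g, Nat.cast_succ, add_sub_cancel_right] at h ⊢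
    rwa [← mul_sub]
  have hlogk : 1 ≤ log k₀ := by
    rw [le_log_iff_exp_le (by positivity)]
    have : (3 : ℝ) ≤ k₀ := by exact_mod_cast hk₀
    linarith [exp_one_lt_d9]
  have hg : g k₀ - g 2 ≤ 7 / 4 := by
    simpa only [g, Nat.cast_ofNat, ← mul_sub] using
      mul_log_one_add_sub_log_one_add_log_two_le hlogk hM hlog
  rw [Finset.sum_Icc_one_eq_add_add_sum_Ioc_two f (by omega)]
  linarith
end
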